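/- Attainment of the Rockafellar–Uryasev infimum at the Value at Risk: let (Ω, ℱ, P) be a probability space, let X : Ω → ℝ be an integrable random variable, and let α ∈ (0,1). Then the infimum inf_{z ∈ ℝ} { z + (1/α) · E[(X − z)₊] } is attained at z* = VaR_{1-α}(X) := inf { z ∈ ℝ : P(X ≥ z) ≤ α }. -/

import Mathlib

/-!
Pointwise, `(x - z)₊ ≥ (x - v)₊ + (v - z) 1_A` whenever `{x > v} ⊆ A ⊆ {x ≥ v}`, so
`E[(X - z)₊] ≥ E[(X - v)₊] + (v - z) P(A)`. If `v` is a quantile, `P(X > v) ≤ α ≤ P(X ≥ v)`,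
taking `A = {X ≥ v}` for `z ≤ v` and `A = {X > v}` for `z ≥ v` gives
`E[(X - z)₊] ≥ E[(X - v)₊] + α (v - z)`, i.e. `v` minimises `z + E[(X - z)₊] / α`.
The Value at Risk is such a quantile, by continuity of `P` along `{X ≥ z}` as `z ↑ v` and `z ↓ v`.
-/

open MeasureTheory Set

/-- Value at Risk at level `1 - α`: `VaR_{1-α}(X) = inf { z : P(X ≥ z) ≤ α }`. -/
noncomputable def valueAtRisk {Ω : Type*} [MeasurableSpace Ω] (P : Measure Ω)
    (X : Ω → ℝ) (α : ℝ) : ℝ :=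
  sInf {z : ℝ | (P {ω | z ≤ X ω}).toReal ≤ α}

open Filter Topology
open scoped ENNReal

section

variable {Ω : Type*} {X : Ω → ℝ} {α : ℝ}

lemma max_sub_add_indicator_le {A : Set Ω} {v : ℝ} (hgt : {ω | v < X ω} ⊆ A)
    (hge : A ⊆ {ω | v ≤ X ω}) (z : ℝ) (ω : Ω) :
    max (X ω - v) 0 + A.indicator (fun _ => v - z) ω ≤ max (X ω - z) 0 := by
  by_cases hω : ω ∈ A
  · have hvX : v ≤ X ω := hge hω
    rw [indicator_of_mem hω, max_eq_left (sub_nonneg.2 hvX)]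
    exact le_max_of_le_left (by linarith)
  · have hXv : X ω ≤ v := le_of_not_gt fun h => hω (hgt h)
    rw [indicator_of_notMem hω, max_eq_right (sub_nonpos.2 hXv), add_zero]
    exact le_max_right _ _

variable [MeasurableSpace Ω] {P : Measure Ω}

lemma measure_lt_le_of_forall_lt_measure_le {v : ℝ} {c : ℝ≥0∞}
    (h : ∀ z, v < z → P {ω | z ≤ X ω} ≤ c) : P {ω | v < X ω} ≤ c := by
  obtain ⟨u, hu_anti, hu_gt, hu_lim⟩ := exists_seq_strictAnti_tendsto v
  have hunion : ⋃ n, {ω | u n ≤ X ω} = {ω | v < X ω} := by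
    ext ω
    simp only [mem_iUnion, mem_ofPred_eq]
    refine ⟨fun ⟨n, hn⟩ => (hu_gt n).trans_le hn, fun hω => ?_⟩
    exact ((hu_lim.eventually (gt_mem_nhds hω)).exists).imp fun _ => le_of_lt
  rw [← hunion, Monotone.measure_iUnion (s := fun n => {ω | u n ≤ X ω})
    fun m n hmn ω hω => (hu_anti.antitone hmn).trans hω]
  exact iSup_le fun n => h _ (hu_gt n)

lemma le_measure_le_of_forall_lt_le_measure [IsFiniteMeasure P] (hX : AEMeasurable X P)
    {v : ℝ} {c : ℝ≥0∞} (h : ∀ z < v, c ≤ P {ω | z ≤ X ω}) : c ≤ P {ω | v ≤ X ω} := by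
  obtain ⟨u, hu_mono, hu_lt, hu_lim⟩ := exists_seq_strictMono_tendsto v
  have hinter : ⋂ n, {ω | u n ≤ X ω} = {ω | v ≤ X ω} := by
    ext ω
    simp only [mem_iInter, mem_ofPred_eq]
    exact ⟨fun hω => le_of_tendsto' hu_lim hω, fun hω n => (hu_lt n).le.trans hω⟩
  rw [← hinter, Antitone.measure_iInter (s := fun n => {ω | u n ≤ X ω})
    (fun m n hmn ω hω => (hu_mono.monotone hmn).trans hω)
    (fun n => hX.nullMeasurable measurableSet_Ici) ⟨0, measure_ne_top P _⟩]
  exact le_iInf fun n => h _ (hu_lt n)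

lemma tendsto_measure_le_atTop [IsFiniteMeasure P] (hX : AEMeasurable X P) :
    Tendsto (fun z => (P {ω | z ≤ X ω}).toReal) atTop (𝓝 0) := by
  have hempty : ⋂ z : ℝ, {ω | z ≤ X ω} = ∅ :=
    eq_empty_of_forall_notMem fun ω hω => (lt_add_one (X ω)).not_ge (mem_iInter.1 hω _)
  have h := tendsto_measure_iInter_atTop (μ := P) (s := fun z : ℝ => {ω | z ≤ X ω})
    (fun z => hX.nullMeasurable measurableSet_Ici) (fun _ _ hzw _ hω => hzw.trans hω)
    ⟨0, measure_ne_top P _⟩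
  rw [hempty, measure_empty] at h
  simpa [Function.comp_def] using (ENNReal.tendsto_toReal ENNReal.zero_ne_top).comp h

lemma tendsto_measure_le_atBot [IsProbabilityMeasure P] :
    Tendsto (fun z => (P {ω | z ≤ X ω}).toReal) atBot (𝓝 1) := by
  have huniv : ⋃ z : ℝ, {ω | z ≤ X ω} = univ :=
    eq_univ_of_forall fun ω => mem_iUnion.2 ⟨X ω, le_refl (X ω)⟩
  have h := tendsto_measure_iUnion_atBot (μ := P) (s := fun z : ℝ => {ω | z ≤ X ω})
    fun _ _ hzw _ hω => hzw.trans hω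
  rw [huniv, measure_univ] at h
  simpa [Function.comp_def] using (ENNReal.tendsto_toReal ENNReal.one_ne_top).comp h

lemma nonempty_setOf_measure_le [IsFiniteMeasure P] (hX : AEMeasurable X P) (hα : 0 < α) :
    {z : ℝ | (P {ω | z ≤ X ω}).toReal ≤ α}.Nonempty :=
  ((tendsto_measure_le_atTop hX).eventually_lt_const hα).exists.imp fun _ => le_of_lt

lemma bddBelow_setOf_measure_le [IsProbabilityMeasure P] (hα : α < 1) :
    BddBelow {z : ℝ | (P {ω | z ≤ X ω}).toReal ≤ α} := by
  obtain ⟨a, ha⟩ := eventually_atBot.1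
    ((tendsto_measure_le_atBot (P := P) (X := X)).eventually_const_lt hα)
  exact ⟨a, fun z hz => le_of_not_ge fun hza => (ha z hza).not_ge hz⟩

lemma lt_measure_of_lt_valueAtRisk [IsProbabilityMeasure P] (hα : α < 1) {z : ℝ}
    (hz : z < valueAtRisk P X α) : α < (P {ω | z ≤ X ω}).toReal :=
  lt_of_not_ge fun h => hz.not_ge (csInf_le (bddBelow_setOf_measure_le hα) h)

lemma measure_le_le_of_valueAtRisk_lt [IsFiniteMeasure P] (hX : AEMeasurable X P) (hα : 0 < α)
    {z : ℝ} (hz : valueAtRisk P X α < z) : (P {ω | z ≤ X ω}).toReal ≤ α := by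
  obtain ⟨w, hw, hwz⟩ := exists_lt_of_csInf_lt (nonempty_setOf_measure_le hX hα) hz
  exact (ENNReal.toReal_mono (measure_ne_top P _)
    (measure_mono fun _ hω => hwz.le.trans hω)).trans hw

lemma le_measure_valueAtRisk_le [IsProbabilityMeasure P] (hX : AEMeasurable X P)
    (hα : α < 1) : α ≤ (P {ω | valueAtRisk P X α ≤ X ω}).toReal := by
  refine (ENNReal.ofReal_le_iff_le_toReal (measure_ne_top P _)).1 ?_
  exact le_measure_le_of_forall_lt_le_measure hX fun z hz =>
    ENNReal.ofReal_le_of_le_toReal (lt_measure_of_lt_valueAtRisk hα hz).le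

lemma measure_valueAtRisk_lt_le [IsFiniteMeasure P] (hX : AEMeasurable X P) (hα : 0 < α) :
    (P {ω | valueAtRisk P X α < X ω}).toReal ≤ α := by
  refine ENNReal.toReal_le_of_le_ofReal hα.le ?_
  exact measure_lt_le_of_forall_lt_measure_le fun z hz =>
    (ENNReal.le_ofReal_iff_toReal_le (measure_ne_top P _) hα.le).2
      (measure_le_le_of_valueAtRisk_lt hX hα hz)

lemma integral_max_sub_add_le [IsFiniteMeasure P] (hX : Integrable X P) {A : Set Ω}
    (hA : NullMeasurableSet A P) {v : ℝ} (hgt : {ω | v < X ω} ⊆ A)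
    (hge : A ⊆ {ω | v ≤ X ω}) (z : ℝ) :
    ∫ ω, max (X ω - v) 0 ∂P + (v - z) * (P A).toReal ≤ ∫ ω, max (X ω - z) 0 ∂P := by
  have hint : ∀ c : ℝ, Integrable (fun ω => max (X ω - c) 0) P := fun c =>
    (hX.sub (integrable_const c)).pos_part
  calc ∫ ω, max (X ω - v) 0 ∂P + (v - z) * (P A).toReal
      = ∫ ω, (max (X ω - v) 0 + A.indicator (fun _ => v - z) ω) ∂P := by
        rw [integral_add (hint v) ((integrable_const _).indicator₀ hA), integral_indicator₀ hA,
          setIntegral_const, smul_eq_mul, mul_comm, measureReal_def]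
    _ ≤ ∫ ω, max (X ω - z) 0 ∂P :=
        integral_mono ((hint v).add ((integrable_const _).indicator₀ hA)) (hint z)
          (max_sub_add_indicator_le hgt hge z)

theorem isMinOn_add_integral_max_sub [IsFiniteMeasure P] (hX : Integrable X P) {v : ℝ}
    (hα : 0 < α) (hgt : (P {ω | v < X ω}).toReal ≤ α) (hge : α ≤ (P {ω | v ≤ X ω}).toReal) :
    IsMinOn (fun z => z + (1 / α) * ∫ ω, max (X ω - z) 0 ∂P) univ v := by
  refine isMinOn_univ_iff.2 fun z => ?_
  have hsub : {ω | v < X ω} ⊆ {ω | v ≤ X ω} := ofPred_subset_ofPred.2 fun _ => le_of_lt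
  have key : ∫ ω, max (X ω - v) 0 ∂P + α * (v - z) ≤ ∫ ω, max (X ω - z) 0 ∂P := by
    rcases le_total z v with hzv | hvz
    · have := mul_le_mul_of_nonneg_left hge (sub_nonneg.2 hzv)
      refine le_trans ?_ (integral_max_sub_add_le hX (A := {ω | v ≤ X ω})
        (hX.aemeasurable.nullMeasurable measurableSet_Ici) hsub subset_rfl z)
      linarith
    · have := mul_le_mul_of_nonpos_left hgt (sub_nonpos.2 hvz)
      refine le_trans ?_ (integral_max_sub_add_le hX (A := {ω | v < X ω})
        (hX.aemeasurable.nullMeasurable measurableSet_Ioi) subset_rfl hsub z)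
      linarith
  have := mul_le_mul_of_nonneg_left key (inv_nonneg.2 hα.le)
  rw [mul_add, ← mul_assoc, inv_mul_cancel₀ hα.ne', one_mul] at this
  rw [one_div]
  linarith

end

/-- The Rockafellar–Uryasev infimum `inf_z { z + (1/α) E[(X - z)₊] }` is attained at
`z* = VaR_{1-α}(X)`. -/
theorem rockafellar_uryasev_inf_attained_at_var
    {Ω : Type*} [MeasurableSpace Ω] (P : Measure Ω) [IsProbabilityMeasure P]
    (X : Ω → ℝ) (hX : Integrable X P) (α : ℝ) (hα : α ∈ Set.Ioo (0 : ℝ) 1) :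
    valueAtRisk P X α + (1 / α) * ∫ ω, max (X ω - valueAtRisk P X α) 0 ∂P
      = sInf {v : ℝ | ∃ z : ℝ, v = z + (1 / α) * ∫ ω, max (X ω - z) 0 ∂P} := by
  have hmin := isMinOn_add_integral_max_sub hX hα.1
    (measure_valueAtRisk_lt_le hX.aemeasurable hα.1)
    (le_measure_valueAtRisk_le hX.aemeasurable hα.2)
  refine Eq.symm (IsLeast.csInf_eq ⟨⟨valueAtRisk P X α, rfl⟩, ?_⟩)
  rintro _ ⟨z, rfl⟩
  exact hmin (mem_univ z)
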